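/- Let a > 0 and ρ ∈ (−1,1) with (a,ρ) ≠ (1,0), let V_0 be the 2×2 matrix with rows (a, ρ) and (ρ, 1/a), and let s_{11}, s_{12} be the (1,1) and (1,2) entries of S = V_0^{1/2} / trace(V_0^{1/2}) (positive definite square root). Define d = 1/2 + √((s_{11} − 1/2)² + s_{12}²), b = d − s_{11}, c = (2d − 1)/(d(1 − d)). Then ρ = c s_{12} b / √( (s_{12}² + b²)² + (s_{12} c b)² ). In other words, the spatial sign correlation functional applied to the spatial sign covariance matrix of a bivariate elliptical distribution with shape V_0 recovers the generalized correlation coefficient ρ exactly. -/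

import Mathlib

/-!
For a trace-one positive definite S = [[x, y], [y, 1 - x]] put w = √((x - 1/2)² + y²). The
eigenvalues of S are d = 1/2 + w and 1 - d, so d(1 - d) = det S and c = 2w / det S, while (y, d - x)
is an eigenvector with y² + (d - x)² = 2w(d - x); the functional therefore collapses to
y / √(y² + (det S)²). For S = R / tr R this is the generalized correlation of V = R², because
(R²)₁₂ = R₁₂ tr R and (R²)₁₁ (R²)₂₂ = (R₁₂ tr R)² + (det R)². For V = V₀ the diagonal product is 1.
-/

open Matrix Real

/-- The spatial sign correlation read off from the entries s₁₁, s₁₂ of a (2×2, symmetric)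
matrix: ρ̂ = c s₁₂ b / √((s₁₂² + b²)² + (s₁₂ c b)²), where
d = 1/2 + √((s₁₁ − 1/2)² + s₁₂²), b = d − s₁₁, c = (2d − 1)/(d(1 − d)). -/
noncomputable def rhoFromS (s₁₁ s₁₂ : ℝ) : ℝ :=
  let d := 1 / 2 + Real.sqrt ((s₁₁ - 1 / 2) ^ 2 + s₁₂ ^ 2)
  let b := d - s₁₁
  let c := (2 * d - 1) / (d * (1 - d))
  c * s₁₂ * b / Real.sqrt ((s₁₂ ^ 2 + b ^ 2) ^ 2 + (s₁₂ * c * b) ^ 2)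

theorem rhoFromS_eq_div_sqrt (x y : ℝ) (hdet : 0 < x * (1 - x) - y ^ 2) :
    rhoFromS x y = y / √(y ^ 2 + (x * (1 - x) - y ^ 2) ^ 2) := by
  rcases eq_or_ne y 0 with rfl | hy
  · simp [rhoFromS]
  set δ := x * (1 - x) - y ^ 2
  set e := x - 1 / 2
  set w := √(e ^ 2 + y ^ 2)
  have hw_sq : w ^ 2 = e ^ 2 + y ^ 2 := sq_sqrt (add_nonneg (sq_nonneg e) (sq_nonneg y))
  have he_lt : e < w := by
    calc e ≤ |e| := le_abs_self e
      _ = √(e ^ 2) := (sqrt_sq_eq_abs e).symm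
      _ < w := sqrt_lt_sqrt (sq_nonneg e) (lt_add_of_pos_right _ (by positivity))
  have hw_pos : 0 < w := sqrt_pos.mpr (by positivity)
  have hb_pos : 0 < w - e := sub_pos.mpr he_lt
  have hb : 1 / 2 + w - x = w - e := by ring
  have hdd : (1 / 2 + w) * (1 - (1 / 2 + w)) = δ := by linear_combination -hw_sq
  have hc : 2 * (1 / 2 + w) - 1 = 2 * w := by ring
  have hnorm : y ^ 2 + (w - e) ^ 2 = 2 * w * (w - e) := by linear_combination -hw_sq
  have hden : (y ^ 2 + (w - e) ^ 2) ^ 2 + (y * (2 * w / δ) * (w - e)) ^ 2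
      = (2 * w * (w - e) / δ * √(y ^ 2 + δ ^ 2)) ^ 2 := by
    rw [hnorm, mul_pow (2 * w * (w - e) / δ), sq_sqrt (by positivity)]
    field_simp
    ring
  simp only [rhoFromS]
  rw [hb, hdd, hc, hden, sqrt_sq (by positivity)]
  field_simp

noncomputable def generalizedCorr (V : Matrix (Fin 2) (Fin 2) ℝ) : ℝ :=
  V 0 1 / √(V 0 0 * V 1 1)

theorem rhoFromS_inv_trace_smul_eq_generalizedCorr (R : Matrix (Fin 2) (Fin 2) ℝ)
    (hR : R.PosDef) :
    rhoFromS ((R.trace⁻¹ • R) 0 0) ((R.trace⁻¹ • R) 0 1) = generalizedCorr (R * R) := by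
  have hsym : R 1 0 = R 0 1 := by simpa using hR.isHermitian.apply 0 1
  have hτ : 0 < R 0 0 + R 1 1 := add_pos hR.diag_pos hR.diag_pos
  have hδ : 0 < R 0 0 * R 1 1 - R 0 1 ^ 2 := by
    simpa only [det_fin_two, hsym, ← sq] using hR.det_pos
  rw [trace_fin_two, Matrix.smul_apply, Matrix.smul_apply, smul_eq_mul, smul_eq_mul,
    generalizedCorr]
  simp only [mul_apply, Fin.sum_univ_two, hsym]
  set p := R 0 0
  set q := R 0 1
  set s := R 1 1
  set δ := p * s - q ^ 2
  have hS : (p + s)⁻¹ * p * (1 - (p + s)⁻¹ * p) - ((p + s)⁻¹ * q) ^ 2 = δ / (p + s) ^ 2 := by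
    field_simp
    ring
  have hV : (p * p + q * q) * (q * q + s * s)
      = ((p + s) ^ 2) ^ 2 * (((p + s)⁻¹ * q) ^ 2 + (δ / (p + s) ^ 2) ^ 2) := by
    field_simp
    ring
  have hX : 0 < √(((p + s)⁻¹ * q) ^ 2 + (δ / (p + s) ^ 2) ^ 2) := sqrt_pos.mpr (by positivity)
  rw [rhoFromS_eq_div_sqrt _ _ (hS ▸ by positivity), hS, hV, sqrt_mul (by positivity),
    sqrt_sq (by positivity)]
  field_simp

theorem spatial_sign_correlation_fisher_consistency_general
    (a ρ : ℝ) (ha : 0 < a)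
    (R : Matrix (Fin 2) (Fin 2) ℝ) (hR : R.PosDef)
    (hRsq : R * R = !![a, ρ; ρ, a⁻¹]) :
    ρ = rhoFromS (((R.trace)⁻¹ • R) 0 0) (((R.trace)⁻¹ • R) 0 1) := by
  rw [rhoFromS_inv_trace_smul_eq_generalizedCorr R hR, hRsq, generalizedCorr]
  simp [ha.ne']

/-- Fisher consistency of the spatial sign correlation functional.
Let a > 0, ρ ∈ (−1,1), (a,ρ) ≠ (1,0), V₀ = [[a,ρ],[ρ,1/a]], R its positive definite
square root, and S = R / trace R (the SSCM of a bivariate elliptical distribution with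
shape V₀).  Then applying the spatial sign correlation functional to the entries of S
recovers ρ exactly. -/
theorem spatial_sign_correlation_fisher_consistency
    (a ρ : ℝ) (ha : 0 < a) (hρ₁ : -1 < ρ) (hρ₂ : ρ < 1) (hne : (a, ρ) ≠ (1, 0))
    (R : Matrix (Fin 2) (Fin 2) ℝ) (hR : R.PosDef)
    (hRsq : R * R = !![a, ρ; ρ, a⁻¹]) :
    ρ = rhoFromS (((R.trace)⁻¹ • R) 0 0) (((R.trace)⁻¹ • R) 0 1) :=
  spatial_sign_correlation_fisher_consistency_general a ρ ha R hR hRsq
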